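/- Let Λ_P be a Penrose model set. Then the class 𝓕(Λ_P) of all finite subsets of Λ_P is successively determined by two X-rays in ℤ[ζ₅]-directions: there exist a ℤ[ζ₅]-direction u₁ ∈ S¹ and a map f assigning to each possible X-ray function X_{u₁}F (for F ∈ 𝓕(Λ_P)) a ℤ[ζ₅]-direction u₂ = f(X_{u₁}F) not parallel to u₁, such that for all F, F' ∈ 𝓕(Λ_P), if X_{u₁}F' = X_{u₁}F and X_{u₂}F' = X_{u₂}F (with u₂ = f(X_{u₁}F)), then F' = F. -/

import Mathlib

open scoped Pointwise

noncomputable section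

instance : TopologicalSpace (ZMod 5) := ⊥
instance : DiscreteTopology (ZMod 5) := ⟨rfl⟩

/-- The primitive 5th root of unity ζ₅ = exp(2πi/5). -/
def zeta5 : ℂ := Complex.exp (2 * Real.pi * Complex.I / 5)

/-- The ring of cyclotomic integers ℤ[ζ₅], as the set of ℤ-combinations of 1, ζ₅, ζ₅², ζ₅³. -/
def Zzeta5 : Set ℂ := {z | ∃ a : Fin 4 → ℤ, z = ∑ j : Fin 4, (a j : ℂ) * zeta5 ^ (j : ℕ)}

/-- The (unique) integer coefficients of an element of ℤ[ζ₅] w.r.t. the basis 1, ζ₅, ζ₅², ζ₅³. -/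
def coeffs (z : ℂ) : Fin 4 → ℤ :=
  open Classical in
  if h : z ∈ Zzeta5 then h.choose else 0

/-- The star map z ↦ (σ₂(z), Σ aⱼ(z) mod 5), with σ₂ the Galois automorphism ζ₅ ↦ ζ₅². -/
def starMap (z : ℂ) : ℂ × ZMod 5 :=
  (∑ j : Fin 4, (coeffs z j : ℂ) * zeta5 ^ (2 * (j : ℕ)),
   ∑ j : Fin 4, ((coeffs z j : ℤ) : ZMod 5))

/-- The regular pentagon P: the convex hull of the 5th roots of unity. -/
def pent : Set ℂ := convexHull ℝ {z : ℂ | z ^ 5 = 1}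

/-- The golden ratio τ = (1+√5)/2. -/
def tauR : ℝ := (1 + Real.sqrt 5) / 2

/-- The Penrose window W_P ⊂ ℝ² × ℤ/5ℤ. -/
def WP : Set (ℂ × ZMod 5) :=
  (pent ×ˢ ({1} : Set (ZMod 5))) ∪ ((-pent) ×ˢ ({2} : Set (ZMod 5))) ∪
    ((tauR • pent) ×ˢ ({3} : Set (ZMod 5))) ∪ ((-(tauR • pent)) ×ˢ ({4} : Set (ZMod 5)))

/-- The shifted window W_P^u = (u, 0) + W_P. -/
def WPu (u : ℂ) : Set (ℂ × ZMod 5) := (fun p => ((u, (0 : ZMod 5)) + p)) '' WP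

/-- The model set Λ_P^u = {z ∈ ℤ[ζ₅] : z⋆ ∈ W_P^u}. -/
def LambdaPu (u : ℂ) : Set ℂ := {z | z ∈ Zzeta5 ∧ starMap z ∈ WPu u}

/-- Λ_P^u is generic if the boundary of W_P^u contains no point of ℤ[ζ₅]⋆. -/
def IsGeneric (u : ℂ) : Prop := ∀ z ∈ Zzeta5, starMap z ∉ frontier (WPu u)

/-- A Penrose model set: a translate t + Λ_P^u of a generic Λ_P^u. -/
def IsPMS (Λ : Set ℂ) : Prop := ∃ t u : ℂ, IsGeneric u ∧ Λ = (fun z => t + z) '' LambdaPu u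

/-- v is parallel to u. -/
def Par (u v : ℂ) : Prop := ∃ r : ℝ, r ≠ 0 ∧ v = r • u

/-- A ℤ[ζ₅]-direction: a direction parallel to a nonzero element of ℤ[ζ₅]. -/
def IsZ5Direction (u : ℂ) : Prop := ∃ z ∈ Zzeta5, z ≠ 0 ∧ Par u z

/-- The line through p in direction u. -/
def line (u p : ℂ) : Set ℂ := {x | ∃ t : ℝ, x = p + t • u}

/-- The X-ray of F in direction u, as a function of the base point of the line. -/
def Xray (u : ℂ) (F : Set ℂ) : ℂ → ℕ := fun p => (F ∩ line u p).ncard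

/-- A convex subset C of Λ: a finite subset with C = conv(C) ∩ Λ. -/
def IsConvexSubset (Λ C : Set ℂ) : Prop :=
  C.Finite ∧ C ⊆ Λ ∧ C = convexHull ℝ C ∩ Λ


/-!
The horizontal X-ray of `F` reveals the finitely many heights `Im x` of its points, and differences
of points of `Λ` lie in `ℤ[ζ₅]`, a ring closed under conjugation containing the purely imaginary
`ω = ζ₅ - conj ζ₅`. If two distinct points `p, q ∈ Λ` at heights of `F` lay on a line of direction
`w = 1 + Nω`, then `q - p = t w` with real `t ≠ 0`, and for `x, y ∈ F` at the same heights
`(y - x) - conj (y - x) = (q - p) - conj (q - p) = N (2tω)` with `2tω = ((q - p) + conj (q - p)) ω`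
a nonzero element of `ℤ[ζ₅]`. Then every coordinate of `(y - x) - conj (y - x)` in the basis
`1, ζ₅, ζ₅², ζ₅³` is a multiple of `N`, and not all vanish, which is impossible once `N` exceeds
them all. For such `N`, each line of direction `w` meets the candidate points in at most one point,
so the X-ray in direction `w` determines `F`.
-/

open ComplexConjugate
open scoped Algebra

section Polynomial

open Polynomial

lemma isPrimitiveRoot_zeta5 : IsPrimitiveRoot zeta5 5 := by
  convert Complex.isPrimitiveRoot_exp 5 (by norm_num) using 2
  simp [zeta5]

lemma conj_zeta5 : conj zeta5 = zeta5 ^ 4 := by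
  rw [← RCLike.inv_eq_conj (isPrimitiveRoot_zeta5.norm'_eq_one (by norm_num))]
  exact inv_eq_of_mul_eq_one_right (by rw [← pow_succ', isPrimitiveRoot_zeta5.pow_eq_one])

lemma natDegree_minpoly_zeta5 : (minpoly ℤ zeta5).natDegree = 4 := by
  rw [← cyclotomic_eq_minpoly isPrimitiveRoot_zeta5 (by norm_num), natDegree_cyclotomic,
    Nat.totient_prime (by norm_num)]

lemma Zzeta5_eq_adjoin : Zzeta5 = ℤ[zeta5] := by
  ext z
  constructor
  · rintro ⟨a, rfl⟩
    exact Subalgebra.sum_mem _ fun j _ => Subalgebra.mul_mem _ (Subalgebra.intCast_mem _ _)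
      (pow_mem (Algebra.self_mem_adjoin_singleton ℤ _) _)
  · rw [SetLike.mem_coe, Algebra.adjoin_singleton_eq_range_aeval]
    rintro ⟨p, rfl⟩
    change aeval zeta5 p ∈ Zzeta5
    have hint : IsIntegral ℤ zeta5 := isPrimitiveRoot_zeta5.isIntegral (by norm_num)
    have hdeg : (p %ₘ minpoly ℤ zeta5).natDegree < 4 := by
      rw [← natDegree_minpoly_zeta5]
      exact natDegree_modByMonic_lt p (minpoly.monic hint) (minpoly.ne_one ℤ zeta5)
    refine ⟨fun j => (p %ₘ minpoly ℤ zeta5).coeff j, ?_⟩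
    rw [← aeval_modByMonic_eq_self_of_root (minpoly.aeval ℤ zeta5), aeval_eq_sum_range' hdeg,
      ← Fin.sum_univ_eq_sum_range]
    simp [zsmul_eq_mul]

lemma mem_Zzeta5_iff {z : ℂ} : z ∈ Zzeta5 ↔ z ∈ ℤ[zeta5] := by
  rw [Zzeta5_eq_adjoin, SetLike.mem_coe]

lemma linearIndependent_zeta5_pow : LinearIndependent ℤ fun j : Fin 4 => zeta5 ^ (j : ℕ) := by
  have h := linearIndependent_pow (K := ℚ) zeta5
  rw [← cyclotomic_eq_minpoly_rat isPrimitiveRoot_zeta5 (by norm_num), natDegree_cyclotomic,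
    Nat.totient_prime (by norm_num)] at h
  exact h.restrict_scalars' ℤ

lemma conj_mem_adjoin_zeta5 {z : ℂ} (hz : z ∈ ℤ[zeta5]) : conj z ∈ ℤ[zeta5] := by
  rw [Algebra.adjoin_singleton_eq_range_aeval] at hz
  obtain ⟨p, rfl⟩ := hz
  have hconj : conj (aeval zeta5 p) = aeval zeta5 (p.comp (X ^ 4)) := by
    rw [aeval_comp, map_pow, aeval_X, ← conj_zeta5]
    exact (aeval_algHom_apply (starRingEnd ℂ).toIntAlgHom zeta5 p).symm
  exact hconj ▸ aeval_mem_adjoin_singleton ℤ zeta5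

end Polynomial

lemma coeffs_spec {z : ℂ} (hz : z ∈ Zzeta5) : z = ∑ j, (coeffs z j : ℂ) * zeta5 ^ (j : ℕ) := by
  rw [coeffs, dif_pos hz]
  exact hz.choose_spec

lemma coeffs_eq_of_eq_sum {z : ℂ} {a : Fin 4 → ℤ} (h : z = ∑ j, (a j : ℂ) * zeta5 ^ (j : ℕ)) :
    coeffs z = a := by
  refine funext <| Fintype.linearIndependent_iffₛ.1 linearIndependent_zeta5_pow _ _ ?_
  simp only [zsmul_eq_mul, ← coeffs_spec ⟨a, h⟩, ← h]

lemma coeffs_natCast_mul {z : ℂ} (hz : z ∈ Zzeta5) (N : ℕ) :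
    coeffs (N * z) = (N : ℤ) • coeffs z := by
  apply coeffs_eq_of_eq_sum
  conv_lhs => rw [coeffs_spec hz]
  simp [Finset.mul_sum, mul_assoc]

def coeffSize (z : ℂ) : ℕ := ∑ j, (coeffs z j).natAbs

lemma le_coeffSize_natCast_mul {z : ℂ} (hz : z ∈ Zzeta5) (hz0 : z ≠ 0) (N : ℕ) :
    N ≤ coeffSize (N * z) := by
  have hpos : coeffSize z ≠ 0 := by
    intro h
    apply hz0
    rw [coeffs_spec hz]
    simp_all [coeffSize, Finset.sum_eq_zero_iff]
  calc N ≤ N * coeffSize z := Nat.le_mul_of_pos_right N (Nat.pos_of_ne_zero hpos)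
    _ = coeffSize (N * z) := by
      simp [coeffSize, coeffs_natCast_mul hz, Int.natAbs_mul, Finset.mul_sum]

lemma IsPMS.sub_mem_zeta5 {Λ : Set ℂ} (hΛ : IsPMS Λ) {x y : ℂ} (hx : x ∈ Λ) (hy : y ∈ Λ) :
    y - x ∈ ℤ[zeta5] := by
  obtain ⟨t, u, -, rfl⟩ := hΛ
  obtain ⟨x, ⟨hx, -⟩, rfl⟩ := hx
  obtain ⟨y, ⟨hy, -⟩, rfl⟩ := hy
  rw [mem_Zzeta5_iff] at hx hy
  simpa only [add_sub_add_left_eq_sub] using sub_mem hy hx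

lemma zeta5_im_pos : 0 < zeta5.im := by
  rw [zeta5, show 2 * Real.pi * Complex.I / 5 = ((2 * Real.pi / 5 : ℝ) : ℂ) * Complex.I by
    push_cast; ring, Complex.exp_ofReal_mul_I_im]
  exact Real.sin_pos_of_pos_of_lt_pi (by positivity) (by linarith [Real.pi_pos])

lemma isZ5Direction_inv_norm_smul {z : ℂ} (hz : z ∈ ℤ[zeta5]) (hz0 : z ≠ 0) :
    IsZ5Direction (‖z‖⁻¹ • z) :=
  ⟨z, mem_Zzeta5_iff.2 hz, hz0, ‖z‖, norm_ne_zero_iff.2 hz0,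
    by rw [smul_smul, mul_inv_cancel₀ (norm_ne_zero_iff.2 hz0), one_smul]⟩

lemma not_par_one_of_im_ne_zero {u : ℂ} (hu : u.im ≠ 0) : ¬ Par 1 u := by
  rintro ⟨r, -, rfl⟩
  simp at hu

lemma line_smul (u p : ℂ) {r : ℝ} (hr : r ≠ 0) : line (r • u) p = line u p := by
  ext x
  constructor
  · rintro ⟨t, rfl⟩
    exact ⟨t * r, by rw [smul_smul]⟩
  · rintro ⟨t, rfl⟩
    exact ⟨t / r, by rw [smul_smul, div_mul_cancel₀ t hr]⟩

lemma Xray_smul (u : ℂ) {r : ℝ} (hr : r ≠ 0) : Xray (r • u) = Xray u := by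
  ext F p
  simp only [Xray, line_smul u p hr]

lemma mem_line_one {p q : ℂ} : q ∈ line 1 p ↔ q.im = p.im := by
  constructor
  · rintro ⟨t, rfl⟩
    simp
  · intro h
    exact ⟨q.re - p.re, Complex.ext (by simp) (by simp [h])⟩

lemma mem_line_self (u p : ℂ) : p ∈ line u p := ⟨0, by simp⟩

lemma Xray_ne_zero_of_mem {u p : ℂ} {G : Set ℂ} (hG : G.Finite) (hp : p ∈ G) : Xray u G p ≠ 0 :=
  ((Set.ncard_pos (hG.subset Set.inter_subset_left)).2 ⟨p, hp, mem_line_self u p⟩).ne'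

lemma exists_mem_line_of_Xray_ne_zero {u p : ℂ} {G : Set ℂ} (h : Xray u G p ≠ 0) :
    ∃ q ∈ G, q ∈ line u p :=
  Set.nonempty_of_ncard_ne_zero h

lemma exists_im_eq_of_Xray_one_eq {F G : Set ℂ} (hG : G.Finite) (h : Xray 1 G = Xray 1 F) {p : ℂ}
    (hp : p ∈ G) : ∃ x ∈ F, x.im = p.im := by
  obtain ⟨x, hx, hxp⟩ := exists_mem_line_of_Xray_ne_zero (h ▸ Xray_ne_zero_of_mem hG hp)
  exact ⟨x, hx, mem_line_one.1 hxp⟩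

lemma subset_of_Xray_eq {u : ℂ} {S G G' : Set ℂ} (hS : ∀ p ∈ S, ∀ q ∈ S, q ∈ line u p → q = p)
    (hG : G ⊆ S) (hG' : G' ⊆ S) (hGfin : G.Finite) (h : Xray u G = Xray u G') : G ⊆ G' := by
  intro p hp
  obtain ⟨q, hq, hqp⟩ := exists_mem_line_of_Xray_ne_zero (h ▸ Xray_ne_zero_of_mem hGfin hp)
  rwa [← hS p (hG hp) q (hG' hq) hqp]

lemma eq_of_Xray_eq {u : ℂ} {S G G' : Set ℂ} (hS : ∀ p ∈ S, ∀ q ∈ S, q ∈ line u p → q = p)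
    (hG : G ⊆ S) (hG' : G' ⊆ S) (hGfin : G.Finite) (hG'fin : G'.Finite)
    (h : Xray u G = Xray u G') : G = G' :=
  (subset_of_Xray_eq hS hG hG' hGfin h).antisymm (subset_of_Xray_eq hS hG' hG hG'fin h.symm)

lemma eq_of_mem_line_of_im_eq {ω : ℂ} (hω : ω ∈ ℤ[zeta5]) (hωconj : conj ω = -ω) (hω0 : ω ≠ 0)
    {N : ℕ} {p q x y : ℂ} (hpq : q - p ∈ ℤ[zeta5]) (hN : coeffSize ((y - x) - conj (y - x)) < N)
    (hpx : p.im = x.im) (hqy : q.im = y.im) (hline : q ∈ line (1 + N * ω) p) : q = p := by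
  obtain ⟨t, ht⟩ := hline
  have hd : q - p = t * (1 + N * ω) := by rw [ht, Complex.real_smul]; ring
  have hd_conj : conj (q - p) = t * (1 - N * ω) := by
    rw [hd, map_mul, Complex.conj_ofReal, map_add, map_one, map_mul, map_natCast, hωconj]
    ring
  have he : (y - x) - conj (y - x) = N * (2 * t * ω) := by
    rw [Complex.sub_conj, show (y - x).im = (q - p).im by simp [hpx, hqy], ← Complex.sub_conj,
      hd_conj, hd]
    ring
  have hmem : 2 * t * ω ∈ ℤ[zeta5] := by
    rw [show (2 * t : ℂ) = q - p + conj (q - p) by rw [hd_conj, hd]; ring]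
    exact mul_mem (add_mem hpq (conj_mem_adjoin_zeta5 hpq)) hω
  by_contra hne
  have ht0 : t ≠ 0 := by
    rintro rfl
    rw [zero_smul, add_zero] at ht
    exact hne ht
  have := le_coeffSize_natCast_mul (mem_Zzeta5_iff.2 hmem) (by simp [ht0, hω0]) N
  rw [← he] at this
  omega

def IsSecondXrayDirection (Λ : Set ℂ) (X : ℂ → ℕ) (u : ℂ) : Prop :=
  ‖u‖ = 1 ∧ IsZ5Direction u ∧ ¬ Par 1 u ∧
    ∀ G ⊆ Λ, ∀ G' ⊆ Λ, G.Finite → G'.Finite → Xray 1 G = X → Xray 1 G' = X →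
      Xray u G = Xray u G' → G = G'

lemma exists_isSecondXrayDirection {Λ F : Set ℂ} (hΛ : ∀ x ∈ Λ, ∀ y ∈ Λ, y - x ∈ ℤ[zeta5])
    (hF : F.Finite) : ∃ u, IsSecondXrayDirection Λ (Xray 1 F) u := by
  obtain ⟨M, hM⟩ := ((hF.prod hF).image
    fun xy : ℂ × ℂ => coeffSize ((xy.2 - xy.1) - conj (xy.2 - xy.1))).bddAbove
  set ω := zeta5 - conj zeta5
  have hω : ω ∈ ℤ[zeta5] :=
    sub_mem (Algebra.self_mem_adjoin_singleton ℤ zeta5)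
      (conj_mem_adjoin_zeta5 (Algebra.self_mem_adjoin_singleton ℤ zeta5))
  have hωim : ω.im = 2 * zeta5.im := by simp [ω]; ring
  have hω0 : ω ≠ 0 := fun h => by simp [h] at hωim; linarith [zeta5_im_pos]
  set w := 1 + ((M + 1 : ℕ) : ℂ) * ω
  have hwim : w.im ≠ 0 := by
    have hpos := zeta5_im_pos
    have : w.im = (M + 1) * ω.im := by simp [w]
    rw [this, hωim]
    positivity
  have hw0 : w ≠ 0 := fun h => hwim (by simp [h])
  have hw : w ∈ ℤ[zeta5] := add_mem (one_mem _) (mul_mem (natCast_mem _ _) hω)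
  refine ⟨‖w‖⁻¹ • w, norm_smul_inv_norm hw0, isZ5Direction_inv_norm_smul hw hw0,
    not_par_one_of_im_ne_zero (by simpa [hw0] using hwim), ?_⟩
  intro G hG G' hG' hGfin hG'fin hXG hXG' hXw
  rw [Xray_smul _ (inv_ne_zero (norm_ne_zero_iff.2 hw0))] at hXw
  refine eq_of_Xray_eq (S := {p ∈ Λ | ∃ x ∈ F, x.im = p.im}) ?_
    (fun p hp => ⟨hG hp, exists_im_eq_of_Xray_one_eq hGfin hXG hp⟩)
    (fun p hp => ⟨hG' hp, exists_im_eq_of_Xray_one_eq hG'fin hXG' hp⟩) hGfin hG'fin hXw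
  rintro p ⟨hp, x, hx, hxp⟩ q ⟨hq, y, hy, hyq⟩
  exact eq_of_mem_line_of_im_eq hω (by simp [ω]) hω0 (hΛ p hp q hq)
    (Nat.lt_succ_of_le (hM ⟨(x, y), ⟨hx, hy⟩, rfl⟩)) hxp.symm hyq.symm

theorem successively_determined_by_two_xrays (Λ : Set ℂ) (hΛ : IsPMS Λ) :
    ∃ u₁ : ℂ, ‖u₁‖ = 1 ∧ IsZ5Direction u₁ ∧
      ∃ f : (ℂ → ℕ) → ℂ,
        ∀ F : Set ℂ, F ⊆ Λ → F.Finite →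
          ‖f (Xray u₁ F)‖ = 1 ∧ IsZ5Direction (f (Xray u₁ F)) ∧
          ¬ Par u₁ (f (Xray u₁ F)) ∧
          ∀ F' : Set ℂ, F' ⊆ Λ → F'.Finite →
            Xray u₁ F' = Xray u₁ F →
            Xray (f (Xray u₁ F)) F' = Xray (f (Xray u₁ F)) F → F' = F := by
  refine ⟨1, norm_one, by simpa using isZ5Direction_inv_norm_smul (one_mem ℤ[zeta5]) one_ne_zero,
    fun X => Classical.epsilon (IsSecondXrayDirection Λ X), fun F hF hFfin => ?_⟩
  obtain ⟨hnorm, hdir, hpar, hsep⟩ := Classical.epsilon_spec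
    (exists_isSecondXrayDirection (fun x hx y hy => hΛ.sub_mem_zeta5 hx hy) hFfin)
  exact ⟨hnorm, hdir, hpar, fun F' hF' hF'fin h₁ h₂ => hsep F' hF' F hF hF'fin hFfin h₁ rfl h₂⟩

end
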